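/- arXiv:1103.0856 — 7 statements merged into one kernel-verified Lean document; each statement's English description precedes it below -/
import Mathlib

section
/- Let r = [m_1, m_2, ..., m_k] be a continued fraction expansion of a rational number 0 < r < 1 with k ≥ 2, all m_i positive integers and m_k ≥ 2, and write m = m_1. Then every term of the sequence S(r) (the sequence of run-lengths of the exponent sign pattern of u_r) is either m or m+1. -/
/-- The exponent-letter word `u_{q/p} = a^{ε₁} b^{ε₂} ⋯ a^{ε_{2p-1}} b^{ε_{2p}}`,
encoded as a list of letters `(generator, sign)` with `true = a`, `false = b`,
and sign `true` meaning exponent `+1`.  Here (0-indexed) `ε_{j+1} = (-1)^⌊jq/p⌋`. -/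
def epsWord (p q : ℕ) : List (Bool × Bool) :=
  (List.range (2 * p)).map fun j => (decide (j % 2 = 0), decide ((j * q / p) % 2 = 0))

/-- The S-sequence of slope `q/p`: run lengths of the sign pattern `⌊jq/p⌋ mod 2`. -/
def signRuns (p q : ℕ) : List ℕ :=
  (((List.range (2 * p)).map fun j => (j * q / p) % 2).splitBy (· == ·)).map List.length

/-- The S-sequence of a rational number. -/
def SseqQ (r : ℚ) : List ℕ := signRuns r.den r.num.toNat

/-- Continued fraction `[m₁, m₂, …, m_k] = 1/(m₁ + 1/(m₂ + ⋯ + 1/m_k))`. -/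
def contFrac : List ℕ → ℚ
  | [] => 0
  | m :: l => 1 / (m + contFrac l)


/-! If `r = q/p` in lowest terms, then `⌊jq/p⌋ = n` exactly for `⌈np/q⌉ ≤ j < ⌈(n+1)p/q⌉`, so
the sign pattern splits into `2q` nonempty blocks of alternating parity, of lengths
`⌈(n+1)p/q⌉ - ⌈np/q⌉ ∈ [⌊p/q⌋, ⌈p/q⌉]`. Since `1/r = m₁ + [m₂, …, m_k]` and a continued fraction
with positive entries lies in `[0, 1]`, we have `m₁ ≤ p/q ≤ m₁ + 1`. -/

namespace List

theorem map_range_eq_flatten_replicate {α : Type*} {f g : ℕ → α} {c : ℕ → ℕ} (hc0 : c 0 = 0)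
    (hc : Monotone c) (hf : ∀ n j, c n ≤ j → j < c (n + 1) → f j = g n) (N : ℕ) :
    (range (c N)).map f = ((range N).map fun n => replicate (c (n + 1) - c n) (g n)).flatten := by
  induction N with
  | zero => simp [hc0]
  | succ N ih =>
    obtain ⟨k, hk⟩ := Nat.exists_eq_add_of_le (hc (Nat.le_add_right N 1))
    rw [hk, range_add, map_append, ih, range_succ, map_append, flatten_append, map_map]
    simp only [map_cons, map_nil, flatten_cons, flatten_nil, append_nil, hk,
      Nat.add_sub_cancel_left]
    congr 1
    refine eq_replicate_iff.2 ⟨by simp, ?_⟩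
    simp only [mem_map, mem_range, Function.comp_apply]
    rintro _ ⟨i, hi, rfl⟩
    exact hf N _ (Nat.le_add_right ..) (by omega)

theorem splitBy_beq_flatten_replicate {α : Type*} [BEq α] [LawfulBEq α] {k : ℕ → ℕ}
    {g : ℕ → α} (hk : ∀ n, 0 < k n) (hg : ∀ n, g n ≠ g (n + 1)) (N : ℕ) :
    ((range N).map fun n => replicate (k n) (g n)).flatten.splitBy (· == ·)
      = (range N).map fun n => replicate (k n) (g n) := by
  apply splitBy_flatten
  · simp [(hk _).ne']
  · simp only [mem_map]
    rintro _ ⟨n, -, rfl⟩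
    exact isChain_replicate_of_rel _ (beq_self_eq_true _)
  · rw [isChain_map, isChain_range]
    intro n _
    simp [getLast_replicate, head_replicate, (hk _).ne', hg n]

end List

namespace Nat

theorem add_ceilDiv_le (a b q : ℕ) (hq : 0 < q) : (a + b) ⌈/⌉ q ≤ a ⌈/⌉ q + b ⌈/⌉ q := by
  rw [ceilDiv_le_iff_le_mul hq, Nat.mul_add]
  exact Nat.add_le_add (le_smul_ceilDiv hq) (le_smul_ceilDiv hq)

theorem ceilDiv_add_div_le (a b q : ℕ) (hq : 0 < q) : a ⌈/⌉ q + b / q ≤ (a + b) ⌈/⌉ q := by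
  have hab : a + b ≤ q * ((a + b) ⌈/⌉ q) := le_smul_ceilDiv hq
  have hb : q * (b / q) ≤ b := Nat.mul_div_le b q
  have : b / q ≤ (a + b) ⌈/⌉ q := Nat.le_of_mul_le_mul_left (by omega) hq
  have : a ⌈/⌉ q ≤ (a + b) ⌈/⌉ q - b / q := by
    rw [ceilDiv_le_iff_le_mul hq, Nat.mul_sub]
    omega
  omega

theorem mul_div_eq_of_ceilDiv_le_of_lt_ceilDiv {p q n j : ℕ} (hq : 0 < q) (hlo : n * p ⌈/⌉ q ≤ j)
    (hhi : j < (n + 1) * p ⌈/⌉ q) : j * q / p = n := by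
  rw [ceilDiv_le_iff_le_mul hq] at hlo
  rw [lt_iff_not_ge, ceilDiv_le_iff_le_mul hq, not_le] at hhi
  exact Nat.div_eq_of_lt_le (by linarith) (by linarith)

end Nat

theorem signRuns_eq_map_ceilDiv_sub {p q : ℕ} (hq : 0 < q) (hqp : q ≤ p) :
    signRuns p q = (List.range (2 * q)).map fun n => (n + 1) * p ⌈/⌉ q - n * p ⌈/⌉ q := by
  set c : ℕ → ℕ := fun n => n * p ⌈/⌉ q
  have hc0 : c 0 = 0 := by simp [c]
  have hc : Monotone c := fun a b hab =>
    (gc_mul_ceilDiv hq).monotone_l (Nat.mul_le_mul_right p hab)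
  have htop : c (2 * q) = 2 * p := by
    simp only [c, show 2 * q * p = q * (2 * p) by ring]
    exact smul_ceilDiv hq _
  have hblock : ∀ n j, c n ≤ j → j < c (n + 1) → (j * q / p) % 2 = n % 2 := fun n j hlo hhi => by
    rw [Nat.mul_div_eq_of_ceilDiv_le_of_lt_ceilDiv hq hlo hhi]
  have hlen : ∀ n, 0 < c (n + 1) - c n := fun n => by
    have := Nat.ceilDiv_add_div_le (n * p) p q hq
    have := (Nat.one_le_div_iff hq).2 hqp
    simp only [c, Nat.succ_mul]
    omega
  have hpar : ∀ n, n % 2 ≠ (n + 1) % 2 := by omega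
  rw [signRuns, ← htop, List.map_range_eq_flatten_replicate hc0 hc hblock,
    List.splitBy_beq_flatten_replicate hlen hpar, List.map_map]
  simp only [Function.comp_def, List.length_replicate, c]

theorem eq_or_eq_succ_of_mem_signRuns {p q m : ℕ} (hq : 0 < q) (hm : 0 < m) (hmp : m * q ≤ p)
    (hpm : p ≤ (m + 1) * q) : ∀ t ∈ signRuns p q, t = m ∨ t = m + 1 := by
  have hlo : m ≤ p / q := (Nat.le_div_iff_mul_le hq).2 hmp
  have hhi : p ⌈/⌉ q ≤ m + 1 := (ceilDiv_le_iff_le_mul hq).2 (by linarith)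
  rw [signRuns_eq_map_ceilDiv_sub hq (le_trans (Nat.le_mul_of_pos_left q hm) hmp)]
  simp only [List.mem_map, List.mem_range]
  rintro _ ⟨n, -, rfl⟩
  have := Nat.ceilDiv_add_div_le (n * p) p q hq
  have := Nat.add_ceilDiv_le (n * p) p q hq
  rw [Nat.succ_mul]
  omega

theorem eq_or_eq_succ_of_mem_SseqQ {r : ℚ} (hr : 0 < r) {m : ℕ} (hm : 0 < m) (hlo : (m : ℚ) ≤ r⁻¹)
    (hhi : r⁻¹ ≤ m + 1) : ∀ t ∈ SseqQ r, t = m ∨ t = m + 1 := by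
  have hnum : 0 < r.num := Rat.num_pos.2 hr
  have hq : ((r.num.toNat : ℕ) : ℚ) = r.num := by exact_mod_cast Int.toNat_of_nonneg hnum.le
  have hinv : r⁻¹ = r.den / r.num.toNat := by
    rw [hq, ← Rat.num_div_den r, inv_div, Rat.num_div_den]
  have hqpos : (0 : ℚ) < r.num.toNat := by rw [hq]; exact_mod_cast hnum
  rw [hinv, le_div_iff₀ hqpos] at hlo
  rw [hinv, div_le_iff₀ hqpos] at hhi
  exact eq_or_eq_succ_of_mem_signRuns (by omega) hm (by exact_mod_cast hlo) (by exact_mod_cast hhi)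

theorem contFrac_mem_Icc : ∀ L : List ℕ, (∀ x ∈ L, 0 < x) → contFrac L ∈ Set.Icc 0 1
  | [], _ => by simp [contFrac]
  | a :: l, hpos => by
    have ⟨hx0, _⟩ := contFrac_mem_Icc l fun x hx => hpos x (List.mem_cons_of_mem a hx)
    have ha : (1 : ℚ) ≤ a := by exact_mod_cast hpos a List.mem_cons_self
    rw [contFrac, one_div]
    exact ⟨inv_nonneg.2 (by linarith), inv_le_one_of_one_le₀ (by linarith)⟩

theorem Sseq_terms_m_or_succ_general (L : List ℕ) (hpos : ∀ x ∈ L, 0 < x) (r : ℚ) (hr : r = contFrac L)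
    (h0 : 0 < r) :
    ∀ t ∈ SseqQ r, t = L.headI ∨ t = L.headI + 1 := by
  obtain ⟨m, L', rfl⟩ := List.exists_cons_of_ne_nil (l := L) <| by
    rintro rfl
    simp [hr, contFrac] at h0
  have hm : 0 < m := hpos m List.mem_cons_self
  obtain ⟨hx0, hx1⟩ := contFrac_mem_Icc L' fun x hx => hpos x (List.mem_cons_of_mem m hx)
  have hinv : r⁻¹ = m + contFrac L' := by rw [hr, contFrac, one_div, inv_inv]
  rw [List.headI_cons]
  exact eq_or_eq_succ_of_mem_SseqQ h0 hm (by linarith) (by linarith)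

/-- for `r = [m₁,…,m_k]` with `k ≥ 2`, all `mᵢ > 0`, `m_k ≥ 2`,
every term of `S(r)` is `m₁` or `m₁ + 1`. -/
theorem Sseq_terms_m_or_succ (L : List ℕ) (hk : 2 ≤ L.length) (hpos : ∀ x ∈ L, 0 < x)
    (hlast : ∀ x ∈ L.getLast?, 2 ≤ x) (r : ℚ) (hr : r = contFrac L)
    (h0 : 0 < r) (h1 : r < 1) :
    ∀ t ∈ SseqQ r, t = L.headI ∨ t = L.headI + 1 :=
  Sseq_terms_m_or_succ_general L hpos r hr h0
end

section
/- Let r = [m_1, ..., m_k] with k ≥ 2 as above, and let m = m_1. If m_2 = 1, then the sequence S(r) contains no two consecutive terms both equal to m; if m_2 ≥ 2, then S(r) contains no two consecutive terms both equal to m+1. -/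
/-!
For `q ≤ p` the floor `⌊jq/p⌋` grows by at most one per step, so the runs of its parity, whose
lengths make up `S(q/p)`, are exactly its level sets `{j | tp ≤ jq < (t+1)p}`. Two consecutive
runs of lengths `x, y` therefore fill `[⌈tp/q⌉, ⌈(t+2)p/q⌉)`, which forces `|(x+y)q - 2p| < q`.
Writing `p/q = m₁ + s` with `s = [m₂, …, m_k]`, we have `s > 1/2` if `m₂ = 1` and `s ≤ 1/2` if
`m₂ ≥ 2`, which excludes `x = y = m₁` in the first case and `x = y = m₁ + 1` in the second.
-/

namespace List
variable {α : Type*} [DecidableEq α]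

theorem exists_eq_replicate_of_splitBy_eq {l g : List α} {S T : List (List α)}
    (h : l.splitBy (· == ·) = S ++ g :: T) :
    ∃ c, 0 < g.length ∧ l = S.flatten ++ (replicate g.length c ++ T.flatten) ∧
      (∀ e ∈ S.flatten.getLast?, e ≠ c) ∧ (∀ e ∈ T.flatten.head?, e ≠ c) := by
  obtain ⟨rfl, hnil, hchain, hbound⟩ := splitBy_eq_iff.mp h
  have hne : ∀ s ∈ S ++ g :: T, s ≠ [] := fun s hs h => hnil (h ▸ hs)
  obtain ⟨c, g, rfl⟩ : ∃ c g', g = c :: g' := exists_cons_of_ne_nil (hne _ (by simp))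
  have hg : c :: g = replicate (g.length + 1) c := by
    have := hchain (c :: g) (by simp)
    simp only [beq_iff_eq] at this
    rw [isChain_cons_eq_iff_eq_replicate.mp this, replicate_succ, length_replicate]
  rw [isChain_append, isChain_cons] at hbound
  refine ⟨c, by simp, by rw [length_cons, ← hg]; simp, ?_, ?_⟩
  · intro e he
    obtain ⟨S, s, rfl⟩ : ∃ S' s, S = S' ++ [s] :=
      (eq_nil_or_concat' S).resolve_left (by rintro rfl; simp at he)
    obtain ⟨s, e', rfl⟩ : ∃ s' e', s = s' ++ [e'] :=
      (eq_nil_or_concat' s).resolve_left (hne s (by simp))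
    obtain rfl : e' = e := by simpa using he
    simpa using hbound.2.2 (s ++ [e']) (by simp) (c :: g) (by simp)
  · intro e he
    obtain ⟨t, T, rfl⟩ : ∃ t T', T = t :: T' :=
      exists_cons_of_ne_nil (by rintro rfl; simp at he)
    obtain ⟨e', t, rfl⟩ : ∃ e' t', t = e' :: t' := exists_cons_of_ne_nil (hne t (by simp))
    obtain rfl : e' = e := by simpa using he
    have := hbound.2.1.1 (e' :: t) (by simp)
    simp only [hg, getLast_replicate, head_cons, beq_eq_false_iff_ne] at this
    obtain ⟨_, _, hce⟩ := this
    exact Ne.symm hce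

end List

section Runs

variable {α : Type*}

structure IsMaximalRun (f : ℕ → α) (n a k : ℕ) (c : α) : Prop where
  pos : 0 < k
  le : a + k ≤ n
  eq : ∀ i < k, f (a + i) = c
  left : a = 0 ∨ f (a - 1) ≠ c
  right : a + k = n ∨ f (a + k) ≠ c

theorem isMaximalRun_of_map_range_eq {f : ℕ → α} {n k : ℕ} {c : α} {L R : List α}
    (h : (List.range n).map f = L ++ (List.replicate k c ++ R)) (hk : 0 < k)
    (hL : ∀ e ∈ L.getLast?, e ≠ c) (hR : ∀ e ∈ R.head?, e ≠ c) :
    IsMaximalRun f n L.length k c := by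
  rw [List.range_eq_range', List.map_eq_append_iff] at h
  obtain ⟨l₁, l₂, h, rfl, h₂⟩ := h
  obtain ⟨a, -, rfl, rfl⟩ := List.range'_eq_append_iff.mp h
  rw [List.map_eq_append_iff] at h₂
  obtain ⟨l₃, l₄, h, h₃, rfl⟩ := h₂
  obtain ⟨j, hj, rfl, rfl⟩ := List.range'_eq_append_iff.mp h
  obtain ⟨rfl, hc⟩ := List.eq_replicate_iff.mp h₃
  simp only [List.getLast?_map, List.getLast?_range', List.head?_map, List.head?_range',
    List.mem_map, List.mem_range'_1, zero_add, mul_one] at hL hR hc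
  simp only [List.length_map, List.length_range', zero_add, mul_one] at hk hj ⊢
  refine ⟨hk, by omega, fun i hi => hc _ ⟨a + i, by omega, rfl⟩, ?_, ?_⟩
  · by_cases ha : a = 0
    · exact Or.inl ha
    · exact Or.inr (by simpa [ha] using hL)
  · by_cases hn : n - a - j = 0
    · exact Or.inl (by omega)
    · exact Or.inr (by simpa [hn] using hR)

theorem exists_isMaximalRun_of_infix [DecidableEq α] {f : ℕ → α} {n x y : ℕ}
    (h : [x, y] <:+: (((List.range n).map f).splitBy (· == ·)).map List.length) :
    ∃ a c d, IsMaximalRun f n a x c ∧ IsMaximalRun f n (a + x) y d := by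
  obtain ⟨P, Q, h⟩ := h
  obtain ⟨G', T, hsplit, hG', -⟩ := List.map_eq_append_iff.mp h.symm
  obtain ⟨S, G, rfl, -, hG⟩ := List.map_eq_append_iff.mp hG'
  obtain ⟨g₁, g₂, rfl⟩ : ∃ g₁ g₂, G = [g₁, g₂] :=
    List.length_eq_two.mp (by simpa using congrArg List.length hG)
  simp only [List.map_cons, List.map_nil, List.cons.injEq, and_true] at hG
  obtain ⟨rfl, rfl⟩ := hG
  obtain ⟨c, hx, hl₁, hL₁, hR₁⟩ := List.exists_eq_replicate_of_splitBy_eq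
    (l := (List.range n).map f) (S := S) (g := g₁) (T := g₂ :: T) (by simp [hsplit])
  obtain ⟨d, hy, hl₂, hL₂, hR₂⟩ := List.exists_eq_replicate_of_splitBy_eq
    (l := (List.range n).map f) (S := S ++ [g₁]) (g := g₂) (T := T) (by simp [hsplit])
  refine ⟨_, c, d, isMaximalRun_of_map_range_eq hl₁ hx hL₁ hR₁, ?_⟩
  simpa using isMaximalRun_of_map_range_eq hl₂ hy hL₂ hR₂

theorem IsMaximalRun.of_mod_two {h : ℕ → ℕ} {n a k c : ℕ}
    (hstep : ∀ j, h (j + 1) = h j ∨ h (j + 1) = h j + 1)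
    (hr : IsMaximalRun (fun j => h j % 2) n a k c) : IsMaximalRun h n a k (h a) := by
  have hc : h a % 2 = c := by simpa using hr.eq 0 hr.pos
  have heq : ∀ i < k, h (a + i) = h a := by
    intro i hi
    induction i with
    | zero => rfl
    | succ i ih =>
      have hsame : h (a + i + 1) % 2 = h (a + i) % 2 :=
        (hr.eq (i + 1) hi).trans (hr.eq i (by omega)).symm
      rw [← add_assoc, ← ih (by omega)]
      have := hstep (a + i)
      omega
  refine ⟨hr.pos, hr.le, heq, hr.left.imp_right ?_, hr.right.imp_right ?_⟩ <;>
    exact fun hne he => hne (by simp [he, hc])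

end Runs

section Floor

variable {p q : ℕ}

theorem add_one_mul_div_eq_or (hqp : q ≤ p) (j : ℕ) :
    (j + 1) * q / p = j * q / p ∨ (j + 1) * q / p = j * q / p + 1 := by
  rcases Nat.eq_zero_or_pos p with rfl | hp
  · simp
  have h₁ : j * q / p ≤ (j + 1) * q / p := Nat.div_le_div_right (by gcongr; omega)
  have h₂ : (j + 1) * q / p ≤ j * q / p + 1 :=
    calc (j + 1) * q / p ≤ (j * q + p) / p := Nat.div_le_div_right (by rw [add_mul]; omega)
      _ = j * q / p + 1 := Nat.add_div_right _ hp
  omega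

theorem monotone_mul_div : Monotone fun j => j * q / p :=
  fun _ _ hij => Nat.div_le_div_right (Nat.mul_le_mul_right q hij)

-- The level-`t` run of `⌊jq/p⌋` is `[⌈tp/q⌉, ⌈(t+1)p/q⌉)`.
theorem IsMaximalRun.mul_div_start {n a k t : ℕ} (hp : 0 < p) (hq : 0 < q)
    (hr : IsMaximalRun (fun j => j * q / p) n a k t) : t * p ≤ a * q ∧ a * q < t * p + q := by
  have ht : a * q / p = t := by simpa using hr.eq 0 hr.pos
  refine ⟨ht ▸ Nat.div_mul_le_self _ _, ?_⟩
  rcases Nat.eq_zero_or_pos a with rfl | ha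
  · rw [zero_mul]; exact Nat.lt_add_left _ hq
  have hne : (a - 1) * q / p ≠ t := hr.left.resolve_left ha.ne'
  have hle : (a - 1) * q / p ≤ t := ht ▸ monotone_mul_div (Nat.sub_le a 1)
  have hlt := (Nat.div_lt_iff_lt_mul hp).mp (lt_of_le_of_ne hle hne)
  have hqa := Nat.le_mul_of_pos_left q ha
  rw [Nat.sub_one_mul] at hlt
  omega

theorem IsMaximalRun.mul_div_end {n a k t : ℕ} (hp : 0 < p) (hq : 0 < q) (hn : p ∣ n)
    (hr : IsMaximalRun (fun j => j * q / p) n a k t) :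
    (t + 1) * p ≤ (a + k) * q ∧ (a + k) * q < (t + 1) * p + q := by
  have ht : (a + k - 1) * q / p = t := by
    simpa [Nat.add_sub_assoc hr.pos] using hr.eq (k - 1) (by have := hr.pos; omega)
  -- At the end of the window, `p ∣ n` makes `n * q / p` exact, so the level still rises there.
  have hlt : t < (a + k) * q / p := by
    rcases hr.right with hend | hne
    · rw [← ht, hend]
      exact Nat.div_lt_div_of_lt_of_dvd (Dvd.dvd.mul_right hn q)
        (Nat.mul_lt_mul_of_pos_right (by have := hr.pos; omega) hq)
    · exact lt_of_le_of_ne (ht ▸ monotone_mul_div (Nat.sub_le (a + k) 1)) (Ne.symm hne)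
  refine ⟨(Nat.le_div_iff_mul_le hp).mp hlt, ?_⟩
  have hlt' := (Nat.div_lt_iff_lt_mul hp).mp (ht.trans_lt (Nat.lt_add_one t))
  have hqa := Nat.le_mul_of_pos_left q (show 0 < a + k by have := hr.pos; omega)
  rw [Nat.sub_one_mul] at hlt'
  omega

end Floor

theorem add_mul_bounds_of_infix_signRuns {p q x y : ℕ} (hq : 0 < q) (hqp : q ≤ p)
    (h : [x, y] <:+: signRuns p q) : 2 * p < (x + y) * q + q ∧ (x + y) * q < 2 * p + q := by
  have hp : 0 < p := hq.trans_le hqp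
  obtain ⟨a, c, d, h₁, h₂⟩ := exists_isMaximalRun_of_infix h
  have hstep := add_one_mul_div_eq_or hqp
  have r₁ := h₁.of_mod_two (h := fun j => j * q / p) hstep
  have r₂ := h₂.of_mod_two (h := fun j => j * q / p) hstep
  have hjump : (a + x) * q / p = a * q / p + 1 := by
    have hlast := r₁.eq (x - 1) (by have := r₁.pos; omega)
    have hne := r₁.right.resolve_left (by have := r₂.le; have := r₂.pos; omega)
    have := hstep (a + (x - 1))
    rw [show a + (x - 1) + 1 = a + x by have := r₁.pos; omega] at this
    omega
  obtain ⟨hstart, hstart'⟩ := r₁.mul_div_start hp hq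
  obtain ⟨hend, hend'⟩ := r₂.mul_div_end hp hq (dvd_mul_left p 2)
  simp only [hjump] at hend hend'
  constructor <;> linarith

theorem Rat.cast_num_toNat {r : ℚ} (hr : 0 ≤ r) : (r.num.toNat : ℚ) = r * r.den := by
  rw [Rat.mul_den_eq_num, ← Int.cast_natCast, Int.toNat_of_nonneg (Rat.num_nonneg.mpr hr)]

theorem contFrac_nonneg : ∀ l : List ℕ, 0 ≤ contFrac l
  | [] => le_rfl
  | m :: l => by
    have := contFrac_nonneg l
    rw [contFrac]
    positivity

theorem contFrac_cons_pos {m : ℕ} (hm : 0 < m) (l : List ℕ) : 0 < contFrac (m :: l) := by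
  have := contFrac_nonneg l
  have : (0 : ℚ) < m := by exact_mod_cast hm
  rw [contFrac]
  positivity

theorem contFrac_cons_le_one {m : ℕ} (hm : 0 < m) (l : List ℕ) : contFrac (m :: l) ≤ 1 := by
  have := contFrac_nonneg l
  have : (1 : ℚ) ≤ m := by exact_mod_cast hm
  rw [contFrac, div_le_one (by linarith)]
  linarith

theorem contFrac_lt_one : ∀ {l : List ℕ}, (∀ x ∈ l, 0 < x) → (∀ x ∈ l.getLast?, 2 ≤ x) →
    contFrac l < 1
  | [], _, _ => zero_lt_one
  | [m], _, hlast => by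
    have : (2 : ℚ) ≤ m := by exact_mod_cast hlast m rfl
    rw [contFrac, contFrac, add_zero, div_lt_one (by linarith)]
    linarith
  | m :: m' :: l, hpos, _ => by
    have hm : (1 : ℚ) ≤ m := by exact_mod_cast hpos m (by simp)
    have := contFrac_cons_pos (hpos m' (by simp)) l
    rw [contFrac, div_lt_one (by linarith)]
    linarith

theorem one_half_lt_contFrac_one_cons {l : List ℕ} (hpos : ∀ x ∈ l, 0 < x)
    (hlast : ∀ x ∈ l.getLast?, 2 ≤ x) : 1 / 2 < contFrac (1 :: l) := by
  have := contFrac_lt_one hpos hlast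
  have := contFrac_nonneg l
  rw [contFrac, Nat.cast_one, lt_div_iff₀ (by linarith)]
  linarith

theorem contFrac_cons_le_one_half {m : ℕ} (hm : 2 ≤ m) (l : List ℕ) :
    contFrac (m :: l) ≤ 1 / 2 := by
  have : (2 : ℚ) ≤ m := by exact_mod_cast hm
  have := contFrac_nonneg l
  rw [contFrac, div_le_div_iff₀ (by linarith) (by norm_num)]
  linarith

theorem Sseq_no_consecutive_general (m1 m2 : ℕ) (rest : List ℕ) (h1 : 0 < m1)
    (hpos : ∀ x ∈ rest, 0 < x)
    (hlast : ∀ x ∈ (m1 :: m2 :: rest).getLast?, 2 ≤ x)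
    (r : ℚ) (hr : r = contFrac (m1 :: m2 :: rest)) :
    (m2 = 1 → ¬ [m1, m1] <:+: SseqQ r) ∧
    (2 ≤ m2 → ¬ [m1 + 1, m1 + 1] <:+: SseqQ r) := by
  set s := contFrac (m2 :: rest)
  set p := r.den
  set q := r.num.toNat
  have hr0 : 0 < r := hr ▸ contFrac_cons_pos h1 _
  have hq : 0 < q := Int.lt_toNat.mpr (Rat.num_pos.mpr hr0)
  have hqp : q ≤ p := Int.toNat_le.mpr (Rat.num_le_denom_iff.mpr (hr ▸ contFrac_cons_le_one h1 _))
  have hpq : (p : ℚ) = q * (m1 + s) := by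
    have : 0 ≤ s := contFrac_nonneg _
    have hr' : r * (m1 + s) = 1 := by
      rw [hr, contFrac, one_div_mul_cancel (by positivity)]
    rw [Rat.cast_num_toNat hr0.le, mul_right_comm, hr', one_mul]
  have hqQ : (0 : ℚ) < q := by exact_mod_cast hq
  refine ⟨fun hm2 hinf => ?_, fun hm2 hinf => ?_⟩
  · have hs : 1 / 2 < s := by
      subst hm2
      exact one_half_lt_contFrac_one_cons hpos fun x hx =>
        hlast x (by rw [List.getLast?_cons_cons, List.getLast?_cons, Option.mem_def.mp hx]; rfl)
    have := (add_mul_bounds_of_infix_signRuns hq hqp hinf).1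
    have : (2 * p : ℚ) < (m1 + m1) * q + q := by exact_mod_cast this
    nlinarith
  · have hs : s ≤ 1 / 2 := contFrac_cons_le_one_half hm2 rest
    have := (add_mul_bounds_of_infix_signRuns hq hqp hinf).2
    have : ((m1 + 1 + (m1 + 1)) * q : ℚ) < 2 * p + q := by exact_mod_cast this
    nlinarith

/-- if `m₂ = 1` then `S(r)` has no two consecutive terms `(m, m)`;
if `m₂ ≥ 2` then `S(r)` has no two consecutive terms `(m+1, m+1)`. -/
theorem Sseq_no_consecutive (m1 m2 : ℕ) (rest : List ℕ) (h1 : 0 < m1) (h2 : 0 < m2)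
    (hpos : ∀ x ∈ rest, 0 < x)
    (hlast : ∀ x ∈ (m1 :: m2 :: rest).getLast?, 2 ≤ x)
    (r : ℚ) (hr : r = contFrac (m1 :: m2 :: rest)) :
    (m2 = 1 → ¬ [m1, m1] <:+: SseqQ r) ∧
    (2 ≤ m2 → ¬ [m1 + 1, m1 + 1] <:+: SseqQ r) :=
  Sseq_no_consecutive_general m1 m2 rest h1 hpos hlast r hr
end

section
/- Let r = [m_1, ..., m_k] with k ≥ 2 and m_k ≥ 2. Then the sequence S(r) begins with the term m_1 + 1 and ends with the term m_1. -/
/-!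
Write `r = q/p` and `r = [m, …]`. Then `1/r = m + c` with `0 < c < 1`, i.e. `m q < p < (m + 1) q`.
Hence `⌊jq/p⌋ = 0` for `j ≤ m` and `⌊(m + 1)q/p⌋ = 1`, so the first run has length `m + 1`.
Reflecting `j ↦ 2p - j` turns floors into ceilings: `⌊jq/p⌋ = 2q - 1` for the last `m`
indices and `2q - 2` for the one before, so the last run has length `m`.
-/

open List

section SplitBy

variable {α : Type*} [BEq α] [LawfulBEq α] {a b : α}

theorem List.head?_splitBy_replicate_append (hab : a ≠ b) (n : ℕ) (t : List α) :
    ((replicate (n + 1) a ++ b :: t).splitBy (· == ·)).head? = some (replicate (n + 1) a) := by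
  rw [splitBy_append_cons _ (by simp [getLast?_replicate, hab]),
    splitBy_of_isChain (by simp) (isChain_replicate_of_rel _ (by simp))]
  rfl

theorem List.getLast?_splitBy_append_replicate (hab : a ≠ b) (n : ℕ) (t : List α) :
    ((t ++ b :: replicate (n + 1) a).splitBy (· == ·)).getLast? =
      some (replicate (n + 1) a) := by
  rw [append_cons, splitBy_append (by simp [head?_replicate, Ne.symm hab]),
    splitBy_of_isChain (by simp) (isChain_replicate_of_rel _ (by simp))]
  simp

end SplitBy

def signPattern (p q : ℕ) : List ℕ :=
  (range (2 * p)).map fun j => j * q / p % 2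

/-- `⌊(2p - i)q/p⌋ = 2q - ⌈iq/p⌉`, with `⌈iq/p⌉ = d + 1`. -/
theorem mul_div_eq_of_add_eq {p q i j c d : ℕ} (hij : i + j = 2 * p) (hcd : c + d + 1 = 2 * q)
    (hlo : d * p < i * q) (hhi : i * q ≤ (d + 1) * p) : j * q / p = c := by
  have e₁ : i * q + j * q = 2 * p * q := by rw [← add_mul, hij]
  have e₂ : c * p + d * p + p = 2 * p * q := by rw [mul_right_comm, ← hcd]; ring
  apply Nat.div_eq_of_lt_le <;> nlinarith

section SignPattern

variable {p q m : ℕ} (hm : 0 < m) (h₁ : m * q < p) (h₂ : p < (m + 1) * q)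
include hm h₁ h₂

theorem signPattern_eq_replicate_append :
    ∃ t, signPattern p q = replicate (m + 1) 0 ++ 1 :: t := by
  have hmp : m + 2 ≤ 2 * p := by nlinarith
  obtain ⟨k, hk⟩ : ∃ k, 2 * p = (m + 1) + (k + 1) := ⟨2 * p - (m + 2), by omega⟩
  have h_low : (range' 0 (m + 1)).map (fun j => j * q / p % 2) = replicate (m + 1) 0 := by
    refine eq_replicate_iff.2 ⟨by simp, ?_⟩
    simp only [mem_map, mem_range'_1]
    rintro _ ⟨j, hj, rfl⟩
    rw [Nat.div_eq_of_lt (by nlinarith)]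
  have h_jump : (m + 1) * q / p = 1 := Nat.div_eq_of_lt_le (by omega) (by nlinarith)
  refine ⟨(range' (m + 2) k).map fun j => j * q / p % 2, ?_⟩
  rw [signPattern, range_eq_range', hk, ← range'_append_1, map_append, h_low, zero_add,
    range'_succ, map_cons, h_jump]

theorem signPattern_eq_append_replicate :
    ∃ t, signPattern p q = t ++ 0 :: replicate m 1 := by
  have hq : 0 < q := Nat.pos_of_ne_zero fun h => by simp [h] at h₂
  have hmp : m + 1 ≤ 2 * p := by nlinarith
  obtain ⟨s, hs⟩ : ∃ s, 2 * p = s + (m + 1) := ⟨2 * p - (m + 1), by omega⟩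
  have h_high : (range' (s + 1) m).map (fun j => j * q / p % 2) = replicate m 1 := by
    refine eq_replicate_iff.2 ⟨by simp, ?_⟩
    simp only [mem_map, mem_range'_1]
    rintro _ ⟨j, hj, rfl⟩
    obtain ⟨i, hi⟩ : ∃ i, i + j = 2 * p := ⟨2 * p - j, by omega⟩
    have hiq : i * q ≤ p := by nlinarith [Nat.mul_le_mul_right q (show i ≤ m by omega)]
    rw [mul_div_eq_of_add_eq (c := 2 * q - 1) (d := 0) hi (by omega) (by simp; omega)
      (by simpa using hiq)]
    omega
  have h_drop : s * q / p % 2 = 0 := by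
    rw [mul_div_eq_of_add_eq (i := m + 1) (c := 2 * q - 2) (d := 1) (by omega) (by omega)
      (by omega) (by nlinarith)]
    omega
  refine ⟨(range' 0 s).map fun j => j * q / p % 2, ?_⟩
  rw [signPattern, range_eq_range', hs, ← range'_append_1, range'_succ, map_append, map_cons,
    zero_add, h_drop, h_high]

end SignPattern

theorem signRuns_head_last {p q m : ℕ} (hm : 0 < m) (h₁ : m * q < p) (h₂ : p < (m + 1) * q) :
    (signRuns p q).head? = some (m + 1) ∧ (signRuns p q).getLast? = some m := by
  obtain ⟨n, rfl⟩ := Nat.exists_eq_add_one_of_ne_zero hm.ne'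
  obtain ⟨t, ht⟩ := signPattern_eq_replicate_append hm h₁ h₂
  obtain ⟨t', ht'⟩ := signPattern_eq_append_replicate hm h₁ h₂
  have h_runs : signRuns p q = ((signPattern p q).splitBy (· == ·)).map length := rfl
  constructor
  · rw [h_runs, head?_map, ht, head?_splitBy_replicate_append zero_ne_one]
    simp
  · rw [h_runs, getLast?_map, ht', getLast?_splitBy_append_replicate one_ne_zero]
    simp

theorem contFrac_mem_Ioo : ∀ {l : List ℕ}, l ≠ [] → (∀ x ∈ l, 0 < x) →
    (∀ x ∈ l.getLast?, 2 ≤ x) → contFrac l ∈ Set.Ioo 0 1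
  | [m], _, _, hlast => by
    have hm : (2 : ℚ) ≤ m := by exact_mod_cast hlast m rfl
    simp only [contFrac, add_zero, Set.mem_Ioo, one_div]
    exact ⟨by positivity, inv_lt_one_of_one_lt₀ (by linarith)⟩
  | m :: b :: l, _, hpos, hlast => by
    have hm : (1 : ℚ) ≤ m := by exact_mod_cast hpos m mem_cons_self
    obtain ⟨hc₀, -⟩ := contFrac_mem_Ioo (cons_ne_nil b l)
      (fun x hx => hpos x (mem_cons_of_mem m hx)) (by simpa using hlast)
    simp only [contFrac, Set.mem_Ioo, one_div] at hc₀ ⊢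
    exact ⟨by positivity, inv_lt_one_of_one_lt₀ (by linarith)⟩

theorem mul_num_lt_den_lt_succ_mul_num {r : ℚ} {m : ℕ} (hr : r⁻¹ ∈ Set.Ioo (m : ℚ) (m + 1)) :
    m * r.num.toNat < r.den ∧ r.den < (m + 1) * r.num.toNat := by
  have hr₀ : 0 < r := inv_pos.1 (lt_of_le_of_lt (Nat.cast_nonneg m) hr.1)
  have hnum : (r.num.toNat : ℚ) = r.num := by
    exact_mod_cast Int.toNat_of_nonneg (Rat.num_pos.2 hr₀).le
  have hq : (0 : ℚ) < r.num.toNat := by rw [hnum]; exact_mod_cast Rat.num_pos.2 hr₀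
  have hinv : r⁻¹ = r.den / r.num.toNat := by rw [hnum, ← inv_div, Rat.num_div_den]
  rw [hinv, Set.mem_Ioo, lt_div_iff₀ hq, div_lt_iff₀ hq] at hr
  exact ⟨by exact_mod_cast hr.1, by exact_mod_cast hr.2⟩

/-- for `r = [m₁,…,m_k]` with `k ≥ 2` and `m_k ≥ 2`, the sequence `S(r)`
begins with `m₁ + 1` and ends with `m₁`. -/
theorem Sseq_head_last (L : List ℕ) (hk : 2 ≤ L.length) (hpos : ∀ x ∈ L, 0 < x)
    (hlast : ∀ x ∈ L.getLast?, 2 ≤ x) (r : ℚ) (hr : r = contFrac L) :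
    (SseqQ r).head? = some (L.headI + 1) ∧ (SseqQ r).getLast? = some L.headI := by
  obtain ⟨m, b, l, rfl⟩ : ∃ m b l, L = m :: b :: l := by
    match L, hk with
    | m :: b :: l, _ => exact ⟨m, b, l, rfl⟩
  obtain ⟨hc₀, hc₁⟩ := contFrac_mem_Ioo (cons_ne_nil b l)
    (fun x hx => hpos x (mem_cons_of_mem m hx)) (by simpa using hlast)
  have hinv : r⁻¹ ∈ Set.Ioo (m : ℚ) (m + 1) := by
    rw [hr, contFrac, one_div, inv_inv]
    exact ⟨by linarith, by linarith⟩
  obtain ⟨h₁, h₂⟩ := mul_num_lt_den_lt_succ_mul_num hinv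
  exact signRuns_head_last (hpos m mem_cons_self) h₁ h₂
end

section
/- For r = (n+1)/(3n+2) with n ≥ 2 an integer (so r = [2,1,n] as a continued fraction), the cyclic S-sequence CS(r) equals ((3,3,...,3, 2, 3,3,...,3, 2)) with n threes in each block; equivalently S(r) = (n⟨3⟩, 2, n⟨3⟩, 2) where n⟨3⟩ denotes n successive 3's. -/
/-! For `j < 3n + 2` one has `⌊j(n+1)/(3n+2)⌋ = ⌊j/3⌋`, and `⌊(3n+2+j)(n+1)/(3n+2)⌋ = n + 1 + ⌊j/3⌋`.
So along `j < 2(3n+2)` the floor runs through `0, 1, …, 2n+1`, taking each value three times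
except `n` and `2n+1`, which it takes twice. Consecutive values have opposite parity, so the sign
runs are exactly these multiplicities. -/

open List

section Runs

variable {α : Type*} [BEq α] [LawfulBEq α]

theorem List.splitBy_flatten_replicate {R : List (ℕ × α)} (hpos : ∀ x ∈ R, 0 < x.1)
    (hR : R.IsChain fun x y => x.2 ≠ y.2) :
    (R.map fun x => replicate x.1 x.2).flatten.splitBy (· == ·) =
      R.map fun x => replicate x.1 x.2 := by
  have hne : ∀ x ∈ R, replicate x.1 x.2 ≠ [] := fun x hx => by
    simpa using (hpos x hx).ne'
  refine splitBy_flatten ?_ ?_ ?_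
  · intro h
    obtain ⟨x, hx, hnil⟩ := mem_map.1 h
    exact hne x hx hnil
  · exact forall_mem_map.2 fun x _ => isChain_replicate_of_rel x.1 (beq_self_eq_true x.2)
  · rw [isChain_map]
    refine hR.imp_of_mem_imp fun x y hx hy hxy => ⟨hne x hx, hne y hy, ?_⟩
    simpa [getLast_replicate, head_replicate] using hxy

theorem map_length_splitBy_flatten_replicate_mod_two {R : List (ℕ × ℕ)}
    (hpos : ∀ x ∈ R, 0 < x.1) (hR : (R.map Prod.snd).IsChain fun a b => b = a + 1) :
    (((R.map fun x => replicate x.1 x.2).flatten.map (· % 2)).splitBy (· == ·)).map length =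
      R.map Prod.fst := by
  set R₂ := R.map fun x => (x.1, x.2 % 2)
  have hflat : (R.map fun x => replicate x.1 x.2).flatten.map (· % 2) =
      (R₂.map fun x => replicate x.1 x.2).flatten := by
    simp [R₂, map_flatten, Function.comp_def]
  have hR₂ : R₂.IsChain fun x y => x.2 ≠ y.2 := by
    rw [isChain_map] at hR ⊢
    exact hR.imp fun x y h => by simp only [h, ne_eq]; omega
  rw [hflat, splitBy_flatten_replicate (R := R₂) (forall_mem_map.2 hpos) hR₂]
  simp [R₂, Function.comp_def]

end Runs

theorem List.map_mul_add_div_range {d k : ℕ} (m : ℕ) (hk : k ≤ d) :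
    (range k).map (fun i => (m * d + i) / d) = replicate k m :=
  eq_replicate_iff.2 ⟨by simp, by
    simp only [mem_map, mem_range]
    rintro _ ⟨i, hi, rfl⟩
    rw [Nat.add_comm, Nat.add_mul_div_right _ _ (by omega), Nat.div_eq_of_lt (by omega), zero_add]⟩

theorem List.map_div_range_mul (d m : ℕ) :
    (range (m * d)).map (· / d) = ((range m).map (replicate d)).flatten := by
  induction m with
  | zero => simp
  | succ m ih =>
    rw [Nat.succ_mul, range_add, map_append, ih, map_map, Function.comp_def,
      map_mul_add_div_range m le_rfl, range_succ, map_append, flatten_append]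
    simp

theorem Nat.mul_succ_div_three_mul_add_two {n i : ℕ} (hi : i < 3 * n + 2) :
    i * (n + 1) / (3 * n + 2) = i / 3 := by
  obtain ⟨a, b, hb, rfl⟩ : ∃ a b, b < 3 ∧ i = 3 * a + b := ⟨i / 3, i % 3, by omega, by omega⟩
  rw [show (3 * a + b) / 3 = a by omega]
  apply Nat.div_eq_of_lt_le
  · nlinarith
  · interval_cases b <;> nlinarith

/-- The runs of `⌊j / 3⌋` for `j < 3n + 2`, as `(length, value)` pairs. -/
def divThreeRuns (n : ℕ) : List (ℕ × ℕ) := (range n).map (fun k => (3, k)) ++ [(2, n)]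

theorem map_div_three_range (n : ℕ) :
    (range (3 * n + 2)).map (· / 3) = ((divThreeRuns n).map fun x => replicate x.1 x.2).flatten := by
  rw [Nat.mul_comm, range_add, map_append, map_div_range_mul, map_map, Function.comp_def,
    map_mul_add_div_range n (by norm_num)]
  simp only [divThreeRuns, map_append, map_map, flatten_append, Function.comp_def, map_cons,
    map_nil, flatten_cons, flatten_nil, append_nil]

theorem map_mul_succ_div_three_mul_add_two_range (n : ℕ) :
    (range (2 * (3 * n + 2))).map (fun j => j * (n + 1) / (3 * n + 2)) =
      ((divThreeRuns n ++ (divThreeRuns n).map fun x => (x.1, n + 1 + x.2)).map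
        fun x => replicate x.1 x.2).flatten := by
  have hfirst : (range (3 * n + 2)).map (fun j => j * (n + 1) / (3 * n + 2)) =
      (range (3 * n + 2)).map (· / 3) :=
    map_congr_left fun i hi => Nat.mul_succ_div_three_mul_add_two (mem_range.1 hi)
  have hsecond : (range (3 * n + 2)).map (fun i => (3 * n + 2 + i) * (n + 1) / (3 * n + 2)) =
      ((range (3 * n + 2)).map (· / 3)).map (n + 1 + ·) := by
    rw [map_map]
    refine map_congr_left fun i hi => ?_
    rw [Function.comp_apply, Nat.add_mul, Nat.add_comm, Nat.add_mul_div_left _ _ (by omega),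
      Nat.mul_succ_div_three_mul_add_two (mem_range.1 hi), Nat.add_comm]
  rw [two_mul, range_add, map_append, map_map, Function.comp_def, hfirst, hsecond,
    map_div_three_range, map_append, flatten_append, map_flatten, map_map, map_map]
  simp [Function.comp_def, map_replicate]

theorem Sseq_2_1_n_general (n : ℕ) :
    signRuns (3 * n + 2) (n + 1) =
      List.replicate n 3 ++ [2] ++ List.replicate n 3 ++ [2] := by
  set R := divThreeRuns n ++ (divThreeRuns n).map fun x => (x.1, n + 1 + x.2)
  have hlengths : R.map Prod.fst = replicate n 3 ++ [2] ++ replicate n 3 ++ [2] := by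
    simp [R, divThreeRuns, Function.comp_def]
  have hpos : ∀ x ∈ R, 0 < x.1 := fun x hx => by
    have hmem := hlengths ▸ mem_map_of_mem (f := Prod.fst) hx
    simp only [append_assoc, mem_append, mem_replicate, mem_singleton] at hmem
    omega
  have hchain : (R.map Prod.snd).IsChain fun a b => b = a + 1 := by
    have hvalues : R.map Prod.snd = range (2 * n + 2) := by
      simp [R, divThreeRuns, show 2 * n + 2 = (n + 1) + (n + 1) by ring, range_add, range_succ]
    rw [hvalues, isChain_range]
    exact fun _ _ => rfl
  have hsigns : (range (2 * (3 * n + 2))).map (fun j => j * (n + 1) / (3 * n + 2) % 2) =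
      (R.map fun x => replicate x.1 x.2).flatten.map (· % 2) := by
    rw [← map_mul_succ_div_three_mul_add_two_range, map_map]
    rfl
  rw [signRuns, hsigns, map_length_splitBy_flatten_replicate_mod_two hpos hchain, hlengths]

/-- for `r = (n+1)/(3n+2)` with `n ≥ 2`,
`S(r) = (n⟨3⟩, 2, n⟨3⟩, 2)`. -/
theorem Sseq_2_1_n (n : ℕ) (hn : 2 ≤ n) :
    signRuns (3 * n + 2) (n + 1) =
      List.replicate n 3 ++ [2] ++ List.replicate n 3 ++ [2] :=
  Sseq_2_1_n_general n
end

section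
/- For r = n/(2n+1) with n ≥ 2 an integer (so r = [2,n] as a continued fraction), the S-sequence S(r) equals (3, (n−1)⟨2⟩, 3, (n−1)⟨2⟩), i.e., the run-length sequence of the exponent signs of u_r is 3 followed by n−1 twos, then 3 followed by n−1 twos. -/
/-!
Since `q ≤ p`, the floor `⌊jq/p⌋` grows by at most one at each step, so the runs of its parity
are exactly its level sets. The level set of `v` is the interval `[⌈vp/q⌉, ⌈(v+1)p/q⌉)`, hence
`S(q/p)` is the difference sequence of `v ↦ ⌈vp/q⌉` for `v < 2q`. For `p = mn + 1` and `q = n`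
we have `⌈vp/n⌉ = mv + ⌈v/n⌉`, whose differences are `m + 1` at multiples of `n` and `m`
elsewhere.
-/

open List

theorem List.map_range_eq_flatten_replicate_s6 {f b : ℕ → ℕ} (hb : Monotone b) (hb0 : b 0 = 0)
    (hf : ∀ v j, b v ≤ j → j < b (v + 1) → f j = v) (m : ℕ) :
    (range (b m)).map f = ((range m).map fun v => replicate (b (v + 1) - b v) v).flatten := by
  induction m with
  | zero => simp [hb0]
  | succ m ih =>
    have hblock : (range (b (m + 1) - b m)).map (fun i => f (b m + i)) =
        replicate (b (m + 1) - b m) m := by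
      refine eq_replicate_iff.2 ⟨by simp, ?_⟩
      simp only [mem_map, mem_range]
      rintro _ ⟨i, hi, rfl⟩
      exact hf m _ (by omega) (by omega)
    rw [← Nat.add_sub_cancel' (hb m.le_succ), range_add, map_append, ih, map_map,
      Function.comp_def, hblock, range_succ, map_append, flatten_append]
    simp

theorem List.splitBy_flatten_replicate_mod_two {c : ℕ → ℕ} (hc : ∀ v, 0 < c v) (m : ℕ) :
    ((range m).map fun v => replicate (c v) (v % 2)).flatten.splitBy (· == ·) =
      (range m).map fun v => replicate (c v) (v % 2) := by
  apply splitBy_flatten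
  · simp [fun v => (hc v).ne']
  · simp only [mem_map, mem_range]
    rintro _ ⟨v, -, rfl⟩
    exact isChain_replicate_of_rel _ (beq_self_eq_true _)
  · rw [isChain_map, isChain_range]
    intro v _
    refine ⟨by simp [(hc v).ne'], by simp [(hc _).ne'], ?_⟩
    simp only [getLast_replicate, head_replicate, beq_eq_false_iff_ne]
    omega

theorem Nat.div_eq_of_ceilDiv_le_of_lt_ceilDiv {p q v j : ℕ} (hq : 0 < q)
    (h₁ : v * p ⌈/⌉ q ≤ j) (h₂ : j < (v + 1) * p ⌈/⌉ q) : j * q / p = v := by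
  rw [ceilDiv_le_iff_le_mul hq] at h₁
  rw [← not_le, ceilDiv_le_iff_le_mul hq, not_le] at h₂
  exact Nat.div_eq_of_lt_le (by linarith) (by linarith)

theorem Nat.mul_ceilDiv_lt_succ_mul_ceilDiv {p q : ℕ} (hq : 0 < q) (hqp : q ≤ p) (v : ℕ) :
    v * p ⌈/⌉ q < (v + 1) * p ⌈/⌉ q := by
  rw [← not_le, ceilDiv_le_iff_le_mul hq, ceilDiv_eq_add_pred_div, add_one_mul, mul_comm q]
  have := Nat.div_mul_le_self (v * p + q - 1) q
  omega

theorem signRuns_eq_map_range_ceilDiv {p q : ℕ} (hq : 0 < q) (hqp : q ≤ p) :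
    signRuns p q = (range (2 * q)).map fun v => (v + 1) * p ⌈/⌉ q - v * p ⌈/⌉ q := by
  have hb : StrictMono fun v => v * p ⌈/⌉ q :=
    strictMono_nat_of_lt_succ (Nat.mul_ceilDiv_lt_succ_mul_ceilDiv hq hqp)
  have h2p : 2 * p = 2 * q * p ⌈/⌉ q := by
    rw [mul_comm 2 q, mul_assoc]; exact (smul_ceilDiv hq _).symm
  have hvalues : (range (2 * p)).map (fun j => j * q / p) =
      ((range (2 * q)).map fun v => replicate ((v + 1) * p ⌈/⌉ q - v * p ⌈/⌉ q) v).flatten := by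
    rw [h2p]
    exact map_range_eq_flatten_replicate_s6 hb.monotone (by simp)
      (fun v j => Nat.div_eq_of_ceilDiv_le_of_lt_ceilDiv hq) _
  unfold signRuns
  rw [show (range (2 * p)).map (fun j => j * q / p % 2) =
      ((range (2 * p)).map fun j => j * q / p).map (· % 2) by rw [map_map]; rfl,
    hvalues, map_flatten, map_map]
  simp only [Function.comp_def, map_replicate]
  rw [splitBy_flatten_replicate_mod_two (fun v => Nat.sub_pos_of_lt (hb v.lt_succ_self))]
  simp [Function.comp_def]

theorem Nat.mul_add_ceilDiv {n : ℕ} (hn : 0 < n) (k a : ℕ) : (n * k + a) ⌈/⌉ n = k + a ⌈/⌉ n := by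
  rw [ceilDiv_eq_add_pred_div, ceilDiv_eq_add_pred_div,
    show n * k + a + n - 1 = a + n - 1 + n * k by omega, Nat.add_mul_div_left _ _ hn, add_comm]

theorem Nat.succ_ceilDiv {n : ℕ} (hn : 0 < n) (a : ℕ) :
    (a + 1) ⌈/⌉ n = a ⌈/⌉ n + if n ∣ a then 1 else 0 := by
  rw [ceilDiv_eq_add_pred_div, ceilDiv_eq_add_pred_div, show a + 1 + n - 1 = a + n - 1 + 1 by omega,
    Nat.succ_div, show a + n - 1 + 1 = a + n by omega]
  simp only [Nat.dvd_add_self_right]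

theorem signRuns_mul_add_one {m n : ℕ} (hm : 0 < m) (hn : 0 < n) :
    signRuns (m * n + 1) n =
      ((m + 1) :: replicate (n - 1) m) ++ ((m + 1) :: replicate (n - 1) m) := by
  have hdiff (v : ℕ) : (v + 1) * (m * n + 1) ⌈/⌉ n - v * (m * n + 1) ⌈/⌉ n =
      m + if n ∣ v then 1 else 0 := by
    rw [show (v + 1) * (m * n + 1) = n * (m * (v + 1)) + (v + 1) by ring,
      show v * (m * n + 1) = n * (m * v) + v by ring, Nat.mul_add_ceilDiv hn,
      Nat.mul_add_ceilDiv hn, Nat.succ_ceilDiv hn]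
    rw [mul_add_one]
    omega
  have hperiod : (range n).map (fun v => m + if n ∣ v then 1 else 0) =
      (m + 1) :: replicate (n - 1) m := by
    obtain ⟨k, rfl⟩ : ∃ k, n = k + 1 := ⟨n - 1, by omega⟩
    rw [range_succ_eq_map, map_cons, map_map, Nat.add_sub_cancel, if_pos (dvd_zero _)]
    refine congrArg _ (eq_replicate_iff.2 ⟨by simp, ?_⟩)
    simp only [mem_map, mem_range, Function.comp_apply]
    rintro _ ⟨i, hi, rfl⟩
    rw [if_neg (Nat.not_dvd_of_pos_of_lt i.succ_pos (by omega)), add_zero]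
  rw [signRuns_eq_map_range_ceilDiv hn (by nlinarith), two_mul, range_add, map_append, map_map]
  simp only [hdiff, Function.comp_def, Nat.dvd_add_self_left, hperiod]

/-- for `r = n/(2n+1)` with `n ≥ 2`,
`S(r) = (3, (n−1)⟨2⟩, 3, (n−1)⟨2⟩)`. -/
theorem Sseq_2_n (n : ℕ) (hn : 2 ≤ n) :
    signRuns (2 * n + 1) n =
      3 :: (List.replicate (n - 1) 2 ++ 3 :: List.replicate (n - 1) 2) :=
  signRuns_mul_add_one two_pos (by omega)
end

section
/- For r = 3/7, in the group G = ⟨a, b | u_{3/7}⟩ where u_{3/7} = a b a b^{-1} a^{-1} b a b^{-1} a^{-1} b^{-1} a b a^{-1} b^{-1}, let w = a b^2 a b^{-1} a^{-1} b^{-1}. Then w^2 = u_{2/7} in G, where u_{2/7} is the word associated to slope 2/7; in particular u_{2/7} is a square in G. -/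
/-- The relator `u_{3/7} = a b a b⁻¹ a⁻¹ b a b⁻¹ a⁻¹ b⁻¹ a b a⁻¹ b⁻¹` in `F(a,b)`,
with `a = FreeGroup.of true`, `b = FreeGroup.of false`. -/
def rel37 : FreeGroup Bool :=
  .of true * .of false * .of true * (.of false)⁻¹ * (.of true)⁻¹ * .of false *
    .of true * (.of false)⁻¹ * (.of true)⁻¹ * (.of false)⁻¹ *
    .of true * .of false * (.of true)⁻¹ * (.of false)⁻¹

/-! Read cyclically from its sixth letter, the relation `u_{3/7} = 1` says that
`P = b a b⁻¹ a⁻¹ b⁻¹ a b` is symmetric in `a` and `b`. In the free group,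
`w² = (a b) P Q⁻¹ (a b)⁻¹ u_{2/7}` where `Q` is `P` with `a` and `b` swapped. -/

section

variable {G : Type*} [Group G] {a b : G}

theorem eq_swap_of_u37_eq_one
    (h : a * b * a * b⁻¹ * a⁻¹ * b * a * b⁻¹ * a⁻¹ * b⁻¹ * a * b * a⁻¹ * b⁻¹ = 1) :
    b * a * b⁻¹ * a⁻¹ * b⁻¹ * a * b = a * b * a⁻¹ * b⁻¹ * a⁻¹ * b * a := by
  rw [← mul_inv_eq_one]
  have hfree : b * a * b⁻¹ * a⁻¹ * b⁻¹ * a * b * (a * b * a⁻¹ * b⁻¹ * a⁻¹ * b * a)⁻¹ =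
      (a * b * a * b⁻¹ * a⁻¹)⁻¹ *
        (a * b * a * b⁻¹ * a⁻¹ * b * a * b⁻¹ * a⁻¹ * b⁻¹ * a * b * a⁻¹ * b⁻¹) *
        (a * b * a * b⁻¹ * a⁻¹) := by
    group
  rw [hfree, h]
  group

theorem sq_eq_u27_of_eq_swap
    (h : b * a * b⁻¹ * a⁻¹ * b⁻¹ * a * b = a * b * a⁻¹ * b⁻¹ * a⁻¹ * b * a) :
    (a * b * b * a * b⁻¹ * a⁻¹ * b⁻¹) ^ 2 =
      a * b * a * b * a⁻¹ * b⁻¹ * a⁻¹ * b * a * b * a * b⁻¹ * a⁻¹ * b⁻¹ := by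
  have hfree : (a * b * b * a * b⁻¹ * a⁻¹ * b⁻¹) ^ 2 =
      (a * b) * (b * a * b⁻¹ * a⁻¹ * b⁻¹ * a * b) * (a * b * a⁻¹ * b⁻¹ * a⁻¹ * b * a)⁻¹ *
        (a * b)⁻¹ * (a * b * a * b * a⁻¹ * b⁻¹ * a⁻¹ * b * a * b * a * b⁻¹ * a⁻¹ * b⁻¹) := by
    rw [sq]
    group
  rw [hfree, h]
  group

end

/-- in `G = ⟨a, b | u_{3/7}⟩`, with `w = a b² a b⁻¹ a⁻¹ b⁻¹` one has
`w² = u_{2/7}`, where `u_{2/7} = a b a b a⁻¹ b⁻¹ a⁻¹ b a b a b⁻¹ a⁻¹ b⁻¹` is the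
word associated to the slope `2/7`; in particular `u_{2/7}` is a square in `G`. -/
theorem u27_is_square :
    ∀ (a b : PresentedGroup ({rel37} : Set (FreeGroup Bool))),
      a = PresentedGroup.of true → b = PresentedGroup.of false →
      (a * b * b * a * b⁻¹ * a⁻¹ * b⁻¹) ^ 2 =
        a * b * a * b * a⁻¹ * b⁻¹ * a⁻¹ * b * a * b * a * b⁻¹ * a⁻¹ * b⁻¹ := by
  rintro a b rfl rfl
  exact sq_eq_u27_of_eq_swap <| eq_swap_of_u37_eq_one <|
    PresentedGroup.one_of_mem (Set.mem_singleton rel37)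
end

section
/- For r = n/(2n+1) with n ≥ 2, in the group G = ⟨a, b | u_r⟩ the element u_s with s = (n+1)/(2n+1) commutes with the meridian generator b; i.e., b u_s b^{-1} = u_s in G. -/
/-- The word `u_{q/p}` as an element of the free group `F(a,b)`, `a = of true`,
`b = of false`. -/
def uElt (p q : ℕ) : FreeGroup Bool := FreeGroup.mk (epsWord p q)

/-!
For `q ∈ {n, n + 1}`, `⌊j q / (2n+1)⌋` equals `⌊(j + c) / 2⌋` for a constant `c` on each half of
the index range, so the sign pattern of `u_r` and `u_s` is 4-periodic there and in the free group
`u_r = a ⁅b,a⁆^⌈n/2⌉ b^((-1)^n) ⁅a,b⁆^⌊n/2⌋` and `u_s = ⁅a,b⁆^⌊n/2⌋ a b^((-1)^(n+1)) ⁅a⁻¹,b⁆^⌈n/2⌉`.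
With `x = ⁅a,b⁆^⌊n/2⌋`, which commutes with `⁅a,b⁆`, the relation `u_r = 1` expresses `b` through
`a`, `x` and `⁅a,b⁆`; together with `⁅a,b⁆ b = a b a⁻¹` this makes `b u_s = u_s b` a short
computation.
-/

open scoped commutatorElement

namespace FreeGroup

variable {α : Type*}

theorem mk_map_range_add (f : ℕ → α × Bool) (m k : ℕ) :
    mk ((List.range (m + k)).map f) =
      mk ((List.range m).map f) * mk ((List.range k).map fun j => f (m + j)) := by
  rw [List.range_add, List.map_append, List.map_map, mul_mk]
  rfl

theorem mk_map_range_succ (f : ℕ → α × Bool) (m : ℕ) :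
    mk ((List.range (m + 1)).map f) = mk ((List.range m).map f) * mk [f m] := by
  rw [List.range_succ, List.map_append, mul_mk]
  rfl

theorem mk_map_range_four_mul (f : ℕ → α × Bool) (w : List (α × Bool)) (k : ℕ)
    (hf : ∀ i < k, [f (4 * i), f (4 * i + 1), f (4 * i + 2), f (4 * i + 3)] = w) :
    mk ((List.range (4 * k)).map f) = mk w ^ k := by
  induction k with
  | zero => rfl
  | succ k ih =>
    rw [mul_add_one, mk_map_range_add, ih fun i hi => hf i (by omega), pow_succ,
      ← hf k (by omega)]
    rfl

theorem mk_singleton_decide_mod_two (x : α) (t : ℕ) :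
    mk [(x, decide (t % 2 = 0))] = of x ^ ((-1 : ℤ) ^ t) := by
  rcases Nat.even_or_odd t with ht | ht
  · rw [ht.neg_one_pow, zpow_one, decide_eq_true (Nat.even_iff.mp ht)]
    rfl
  · rw [ht.neg_one_pow, zpow_neg_one, decide_eq_false (by rw [Nat.odd_iff.mp ht]; decide)]
    rfl

end FreeGroup

namespace Nat

theorem mul_div_two_mul_add_one_eq_sub_one_div_two (n : ℕ) {j : ℕ} (h₁ : 1 ≤ j)
    (h₂ : j ≤ 2 * n + 2) : j * n / (2 * n + 1) = (j - 1) / 2 := by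
  obtain ⟨i, hi, rfl | rfl⟩ : ∃ i, (j - 1) / 2 = i ∧ (j = 2 * i + 1 ∨ j = 2 * i + 2) :=
    ⟨_, rfl, by omega⟩ <;>
  rw [hi] <;> exact Nat.div_eq_of_lt_le (by nlinarith) (by nlinarith)

theorem mul_div_two_mul_add_one_eq_sub_two_div_two (n : ℕ) {j : ℕ} (h₁ : 2 * n + 2 ≤ j)
    (h₂ : j ≤ 4 * n + 2) : j * n / (2 * n + 1) = (j - 2) / 2 := by
  obtain ⟨i, hi, rfl | rfl⟩ : ∃ i, (j - 2) / 2 = i ∧ (j = 2 * i + 2 ∨ j = 2 * i + 3) :=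
    ⟨_, rfl, by omega⟩ <;>
  rw [hi] <;> exact Nat.div_eq_of_lt_le (by nlinarith) (by nlinarith)

theorem mul_add_one_div_two_mul_add_one_eq_div_two (n : ℕ) {j : ℕ} (h : j ≤ 2 * n) :
    j * (n + 1) / (2 * n + 1) = j / 2 := by
  obtain ⟨i, hi, rfl | rfl⟩ : ∃ i, j / 2 = i ∧ (j = 2 * i ∨ j = 2 * i + 1) :=
    ⟨_, rfl, by omega⟩ <;>
  rw [hi] <;> exact Nat.div_eq_of_lt_le (by nlinarith) (by nlinarith)

theorem mul_add_one_div_two_mul_add_one_eq_add_one_div_two (n : ℕ) {j : ℕ} (h₁ : 2 * n ≤ j)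
    (h₂ : j ≤ 4 * n + 1) : j * (n + 1) / (2 * n + 1) = (j + 1) / 2 := by
  obtain ⟨i, rfl | rfl⟩ := Nat.even_or_odd' j
  · rw [show (2 * i + 1) / 2 = i by omega]
    exact Nat.div_eq_of_lt_le (by nlinarith) (by nlinarith)
  · rw [show (2 * i + 1 + 1) / 2 = i + 1 by omega]
    exact Nat.div_eq_of_lt_le (by nlinarith) (by nlinarith)

end Nat

section Words

open FreeGroup Nat

theorem uElt_two_mul_add_one_self (n : ℕ) :
    uElt (2 * n + 1) n = of true * ⁅of false, of true⁆ ^ ((n + 1) / 2) *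
      of false ^ ((-1 : ℤ) ^ n) * ⁅of true, of false⁆ ^ (n / 2) := by
  set m := (n + 1) / 2
  have hmid : (1 + 4 * m) * n / (2 * n + 1) = n := by
    obtain h | h : 1 + 4 * m = 2 * n + 1 ∨ 1 + 4 * m = 2 * n + 3 := by omega
    all_goals rw [h]; exact Nat.div_eq_of_lt_le (by nlinarith) (by nlinarith)
  rw [uElt, epsWord, show 2 * (2 * n + 1) = 1 + 4 * m + 1 + 4 * (n / 2) by omega,
    mk_map_range_add, mk_map_range_succ, mk_map_range_add,
    mk_map_range_four_mul _ [(false, true), (true, true), (false, false), (true, false)],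
    mk_map_range_four_mul _ [(true, true), (false, true), (true, false), (false, false)],
    show (1 + 4 * m) % 2 = 1 by omega, hmid, mk_singleton_decide_mod_two]
  · simp only [List.range_one, List.map_cons, List.map_nil, Nat.zero_mul, Nat.zero_div]
    -- each block list spells its commutator letter for letter, so `mk` of it is that commutator
    rfl
  · intro i hi
    simp (disch := omega) only [mul_div_two_mul_add_one_eq_sub_two_div_two, List.cons.injEq,
      Prod.mk.injEq, decide_eq_true_eq, decide_eq_false_iff_not, and_true]
    omega
  · intro i hi
    simp (disch := omega) only [mul_div_two_mul_add_one_eq_sub_one_div_two, List.cons.injEq,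
      Prod.mk.injEq, decide_eq_true_eq, decide_eq_false_iff_not, and_true]
    omega

theorem uElt_two_mul_add_one_succ (n : ℕ) :
    uElt (2 * n + 1) (n + 1) = ⁅of true, of false⁆ ^ (n / 2) * of true *
      of false ^ ((-1 : ℤ) ^ (n + 1)) * ⁅(of true)⁻¹, of false⁆ ^ ((n + 1) / 2) := by
  set k := n / 2
  have hfirst : 4 * k * (n + 1) / (2 * n + 1) = 2 * k := by
    rw [mul_add_one_div_two_mul_add_one_eq_div_two n (by omega)]; omega
  have hmid : (4 * k + 1) * (n + 1) / (2 * n + 1) % 2 = (n + 1) % 2 := by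
    obtain h | h : 4 * k + 1 = 2 * n + 1 ∨ 4 * k + 1 + 1 = 2 * n := by omega
    · rw [mul_add_one_div_two_mul_add_one_eq_add_one_div_two n (by omega) (by omega)]; omega
    · rw [mul_add_one_div_two_mul_add_one_eq_div_two n (by omega)]; omega
  rw [uElt, epsWord, show 2 * (2 * n + 1) = 4 * k + 1 + 1 + 4 * ((n + 1) / 2) by omega,
    mk_map_range_add, mk_map_range_succ, mk_map_range_succ,
    mk_map_range_four_mul _ [(true, true), (false, true), (true, false), (false, false)],
    mk_map_range_four_mul _ [(true, false), (false, true), (true, true), (false, false)],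
    hfirst, hmid, show 4 * k % 2 = 0 by omega, show (4 * k + 1) % 2 = 1 by omega,
    show 2 * k % 2 = 0 by omega, mk_singleton_decide_mod_two]
  · rfl
  · intro i hi
    simp (disch := omega) only [mul_add_one_div_two_mul_add_one_eq_add_one_div_two,
      List.cons.injEq, Prod.mk.injEq, decide_eq_true_eq, decide_eq_false_iff_not, and_true]
    omega
  · intro i hi
    simp (disch := omega) only [mul_add_one_div_two_mul_add_one_eq_div_two, List.cons.injEq,
      Prod.mk.injEq, decide_eq_true_eq, decide_eq_false_iff_not, and_true]
    omega

end Words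

section Relator

variable {G : Type*} [Group G] {a b x : G}

theorem commute_of_even_relator (hx : Commute x ⁅a, b⁆) (h : a * x⁻¹ * b * x = 1) :
    Commute b (x * a * b⁻¹ * a⁻¹ * x⁻¹ * a) := by
  have hbxa : b * x * a = x := by
    calc b * x * a = x * a⁻¹ * (a * x⁻¹ * b * x) * a := by group
      _ = x := by rw [h]; group
  have hab : a * b * a⁻¹ = x * ⁅a, b⁆ * a⁻¹ * x⁻¹ := by
    calc a * b * a⁻¹ = ⁅a, b⁆ * (b * x * a) * a⁻¹ * x⁻¹ := by rw [commutatorElement_def]; group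
      _ = x * ⁅a, b⁆ * a⁻¹ * x⁻¹ := by rw [hbxa, ← hx.eq]
  calc b * (x * a * b⁻¹ * a⁻¹ * x⁻¹ * a) = b * x * a * b⁻¹ * a⁻¹ * x⁻¹ * a := by group
    _ = x * a * b⁻¹ * a⁻¹ * x⁻¹ * (x * ⁅a, b⁆ * a⁻¹ * x⁻¹) * a := by
      rw [hbxa, commutatorElement_def]; group
    _ = x * a * b⁻¹ * a⁻¹ * x⁻¹ * a * b := by rw [← hab]; group

theorem commute_of_odd_relator (hx : Commute x ⁅a, b⁆)
    (h : a * (x * ⁅a, b⁆)⁻¹ * b⁻¹ * x = 1) :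
    Commute b (x * a * b * a⁻¹ * (x * ⁅a, b⁆)⁻¹ * a) := by
  obtain ⟨z, hz⟩ : ∃ z, x * ⁅a, b⁆ = z := ⟨_, rfl⟩
  have hxz : Commute x z := hz ▸ (Commute.refl x).mul_right hx
  rw [hz] at h ⊢
  have hb : b = x * a * z⁻¹ := by
    calc b = x * (a * z⁻¹ * b⁻¹ * x)⁻¹ * a * z⁻¹ := by group
      _ = x * a * z⁻¹ := by rw [h]; group
  have hxzx : x⁻¹ * z * x = z := by rw [mul_assoc, ← hxz.eq, inv_mul_cancel_left]
  have hzxz : z⁻¹ * x * z = x := by rw [mul_assoc, hxz.eq, inv_mul_cancel_left]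
  have hab : a * b = z * a * z⁻¹ * a := by
    calc a * b = x⁻¹ * (x * ⁅a, b⁆) * b * a := by rw [commutatorElement_def]; group
      _ = x⁻¹ * z * x * a * z⁻¹ * a := by rw [hz, hb]; group
      _ = z * a * z⁻¹ * a := by rw [hxzx]
  calc b * (x * a * b * a⁻¹ * z⁻¹ * a) = b * x * (a * b) * a⁻¹ * z⁻¹ * a := by group
    _ = x * a * (z⁻¹ * x * z) * a * z⁻¹ * z⁻¹ * a := by rw [hab, hb]; group
    _ = x * (a * (x * a * z⁻¹)) * z⁻¹ * a := by rw [hzxz]; group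
    _ = x * (a * b) * a⁻¹ * z⁻¹ * (a * b) := by rw [← hb, hab]; group
    _ = x * a * b * a⁻¹ * z⁻¹ * a * b := by group

theorem commute_of_relator (n : ℕ)
    (h : a * ⁅b, a⁆ ^ ((n + 1) / 2) * b ^ ((-1 : ℤ) ^ n) * ⁅a, b⁆ ^ (n / 2) = 1) :
    Commute b (⁅a, b⁆ ^ (n / 2) * a * b ^ ((-1 : ℤ) ^ (n + 1)) * ⁅a⁻¹, b⁆ ^ ((n + 1) / 2)) := by
  have hc : Commute (⁅a, b⁆ ^ (n / 2)) ⁅a, b⁆ := (Commute.refl _).pow_left _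
  have hconj : ⁅a⁻¹, b⁆ ^ ((n + 1) / 2) = a⁻¹ * ⁅b, a⁆ ^ ((n + 1) / 2) * a := by
    simpa only [inv_inv, commutatorElement_inv_left] using conj_pow (a := a⁻¹)
  rw [hconj]
  rw [← commutatorElement_inv a b, inv_pow] at h ⊢
  obtain ⟨k, rfl | rfl⟩ := Nat.even_or_odd' n
  · rw [(even_two_mul k).neg_one_pow, zpow_one] at h
    rw [(even_two_mul k).add_one.neg_one_pow, zpow_neg_one]
    rw [show (2 * k + 1) / 2 = 2 * k / 2 by omega] at h ⊢
    simpa only [mul_assoc] using commute_of_even_relator hc h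
  · rw [(odd_two_mul_add_one k).neg_one_pow, zpow_neg_one] at h
    rw [(odd_two_mul_add_one k).add_one.neg_one_pow, zpow_one]
    rw [show (2 * k + 1 + 1) / 2 = (2 * k + 1) / 2 + 1 by omega, pow_succ] at h ⊢
    simpa only [mul_assoc] using commute_of_odd_relator hc h

end Relator

theorem us_commutes_with_meridian_general (n : ℕ) :
    ∀ (b us : PresentedGroup ({uElt (2 * n + 1) n} : Set (FreeGroup Bool))),
      b = PresentedGroup.of false →
      us = PresentedGroup.mk _ (uElt (2 * n + 1) (n + 1)) →
      b * us * b⁻¹ = us := by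
  rintro b us rfl rfl
  -- naming the relator set keeps the rewrite of `uElt` below out of the type of the group
  set R : Set (FreeGroup Bool) := {uElt (2 * n + 1) n}
  have hrel : PresentedGroup.mk R (uElt (2 * n + 1) n) = 1 := PresentedGroup.one_of_mem rfl
  rw [uElt_two_mul_add_one_self] at hrel
  rw [uElt_two_mul_add_one_succ]
  simp only [map_mul, map_zpow, map_pow, map_inv, map_commutatorElement] at hrel ⊢
  exact (commute_of_relator n hrel).mul_inv_cancel

/-- for `r = n/(2n+1)` with `n ≥ 2`, in `G = ⟨a, b | u_r⟩` the element
`u_s` with `s = (n+1)/(2n+1)` commutes with the meridian generator `b`. -/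
theorem us_commutes_with_meridian (n : ℕ) (hn : 2 ≤ n) :
    ∀ (b us : PresentedGroup ({uElt (2 * n + 1) n} : Set (FreeGroup Bool))),
      b = PresentedGroup.of false →
      us = PresentedGroup.mk _ (uElt (2 * n + 1) (n + 1)) →
      b * us * b⁻¹ = us :=
  us_commutes_with_meridian_general n
end
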